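/- Let X₁ ~ Poisson(λ) and X₂ ~ Poisson(λ) be independent, and let r ∈ ℕ, r ≥ 1. Then there exists a constant C_r depending only on r such that E[(X₁ - X₂)^{2r}] ≤ C_r (λ^r + λ). -/

import Mathlib

/-!
Let `ν m = E[(X₁ - X₂) ^ m]`, written as a double series against the Poisson weights. The
identity `k p(k) = lam p(k - 1)` gives `E[X₁ f(X₁, X₂)] = lam E[f(X₁ + 1, X₂)]`; together with the
symmetry `X₁ ↔ X₂` this yields `ν (m + 1) = (1 - (-1) ^ m) lam ∑ j ≤ m, (m choose j) ν j`. So odd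
moments vanish, `ν 0 = 1`, and `ν (2s + 2)` is `lam` times a combination of `ν 0` and the
`ν (2t)`, `1 ≤ t ≤ s`. Inductively `ν (2t) = O(lam ^ t + lam)` on `lam > 0`, since
`lam (lam ^ t + lam) = lam ^ (t + 1) + lam ^ 2 = O(lam ^ (s + 1) + lam)`.
-/

open MeasureTheory

/-- The probability mass function of the Poisson distribution with parameter `lam`. -/
noncomputable def poissonPMF (lam : ℝ) (k : ℕ) : ℝ :=
  Real.exp (-lam) * lam ^ k / Nat.factorial k

open Filter Asymptotics Set
open scoped ENNReal Nat

lemma hasSum_poissonPMF (lam : ℝ) : HasSum (poissonPMF lam) 1 := by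
  have h := (NormedSpace.expSeries_div_hasSum_exp lam).mul_left (Real.exp (-lam))
  rw [← Real.exp_eq_exp_ℝ, ← Real.exp_add, neg_add_cancel, Real.exp_zero] at h
  simp only [← mul_div_assoc] at h
  exact h

lemma poissonPMF_nonneg {lam : ℝ} (hlam : 0 ≤ lam) (k : ℕ) : 0 ≤ poissonPMF lam k := by
  unfold poissonPMF
  positivity

lemma succ_mul_poissonPMF_succ (lam : ℝ) (k : ℕ) :
    ((k : ℝ) + 1) * poissonPMF lam (k + 1) = lam * poissonPMF lam k := by
  simp only [poissonPMF, Nat.factorial_succ, Nat.cast_mul, Nat.cast_succ]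
  field_simp
  ring

lemma summable_norm_poissonPMF_mul_pow (lam : ℝ) (m : ℕ) :
    Summable fun k : ℕ => ‖poissonPMF lam k * ((k : ℝ) + 1) ^ m‖ := by
  refine .of_nonneg_of_le (fun _ => norm_nonneg _) (fun k => ?_)
    ((Real.summable_pow_div_factorial (Real.exp 1 * |lam|)).mul_left
      (Real.exp (-lam) * m ! * Real.exp 1))
  -- trade the polynomial weight for a geometric one
  have hpow : ((k : ℝ) + 1) ^ m ≤ m ! * (Real.exp 1 * Real.exp 1 ^ k) := by
    have := Real.pow_div_factorial_le_exp (x := (k : ℝ) + 1) (by positivity) m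
    rw [div_le_iff₀ (by positivity), Real.exp_add, ← Real.exp_one_pow] at this
    linarith
  rw [Real.norm_eq_abs, abs_mul, abs_of_nonneg (by positivity : (0 : ℝ) ≤ ((k : ℝ) + 1) ^ m)]
  calc |poissonPMF lam k| * ((k : ℝ) + 1) ^ m
      ≤ |poissonPMF lam k| * (m ! * (Real.exp 1 * Real.exp 1 ^ k)) := by gcongr
    _ = Real.exp (-lam) * m ! * Real.exp 1 * ((Real.exp 1 * |lam|) ^ k / k !) := by
      simp only [poissonPMF, abs_div, abs_mul, abs_pow, Real.abs_exp, Nat.abs_cast, mul_pow]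
      ring

lemma summable_poissonPMF_mul_poissonPMF_mul (lam : ℝ) (m : ℕ) {f : ℕ × ℕ → ℝ}
    (hf : ∀ p, |f p| ≤ (((p.1 : ℝ) + 1) * ((p.2 : ℝ) + 1)) ^ m) :
    Summable fun p : ℕ × ℕ => poissonPMF lam p.1 * poissonPMF lam p.2 * f p := by
  refine .of_norm_bounded
    ((summable_norm_poissonPMF_mul_pow lam m).mul_norm (summable_norm_poissonPMF_mul_pow lam m))
    fun p => ?_
  simp only [Real.norm_eq_abs, abs_mul, abs_pow]
  have h1 : |(p.1 : ℝ) + 1| = (p.1 : ℝ) + 1 := abs_of_nonneg (by positivity)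
  have h2 : |(p.2 : ℝ) + 1| = (p.2 : ℝ) + 1 := abs_of_nonneg (by positivity)
  rw [h1, h2]
  calc |poissonPMF lam p.1| * |poissonPMF lam p.2| * |f p|
      ≤ |poissonPMF lam p.1| * |poissonPMF lam p.2| *
          (((p.1 : ℝ) + 1) ^ m * ((p.2 : ℝ) + 1) ^ m) := by
        rw [← mul_pow]; gcongr; exact hf p
    _ = _ := by ring

lemma abs_natCast_sub_natCast_le (k l : ℕ) : |(k : ℝ) - l| ≤ ((k : ℝ) + 1) * ((l : ℝ) + 1) := by
  rw [abs_le]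
  constructor <;> nlinarith [(k.cast_nonneg : (0 : ℝ) ≤ k), (l.cast_nonneg : (0 : ℝ) ≤ l)]

noncomputable def skellamMoment (lam : ℝ) (m : ℕ) : ℝ :=
  ∑' p : ℕ × ℕ, poissonPMF lam p.1 * poissonPMF lam p.2 * ((p.1 : ℝ) - p.2) ^ m

lemma summable_skellamMoment (lam : ℝ) (m : ℕ) :
    Summable fun p : ℕ × ℕ => poissonPMF lam p.1 * poissonPMF lam p.2 * ((p.1 : ℝ) - p.2) ^ m :=
  summable_poissonPMF_mul_poissonPMF_mul lam m fun p => by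
    rw [abs_pow]
    exact pow_le_pow_left₀ (abs_nonneg _) (abs_natCast_sub_natCast_le p.1 p.2) m

lemma skellamMoment_zero (lam : ℝ) : skellamMoment lam 0 = 1 := by
  have h := summable_norm_poissonPMF_mul_pow lam 0
  simp only [pow_zero, mul_one] at h
  simp only [skellamMoment, pow_zero, mul_one]
  rw [← tsum_mul_tsum_of_summable_norm h h, (hasSum_poissonPMF lam).tsum_eq, one_mul]

lemma tsum_poissonPMF_mul_poissonPMF_mul_swap (lam : ℝ) (g : ℕ × ℕ → ℝ) :
    ∑' p : ℕ × ℕ, poissonPMF lam p.1 * poissonPMF lam p.2 * g p.swap =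
      ∑' p : ℕ × ℕ, poissonPMF lam p.1 * poissonPMF lam p.2 * g p := by
  rw [← (Equiv.prodComm ℕ ℕ).tsum_eq]
  simp only [Equiv.prodComm_apply, Prod.swap_swap, Prod.fst_swap, Prod.snd_swap, mul_comm]

lemma tsum_poissonPMF_mul_poissonPMF_mul_fst (lam : ℝ) (g : ℕ × ℕ → ℝ) :
    ∑' p : ℕ × ℕ, poissonPMF lam p.1 * poissonPMF lam p.2 * (p.1 * g p) =
      lam * ∑' p : ℕ × ℕ, poissonPMF lam p.1 * poissonPMF lam p.2 * g (p.1 + 1, p.2) := by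
  have hinj : Function.Injective fun p : ℕ × ℕ => (p.1 + 1, p.2) := fun p q h => by
    simp only [Prod.mk.injEq, Nat.add_right_cancel_iff] at h
    exact Prod.ext h.1 h.2
  have hsupp : Function.support
      (fun p : ℕ × ℕ => poissonPMF lam p.1 * poissonPMF lam p.2 * (p.1 * g p)) ⊆
        range fun p : ℕ × ℕ => (p.1 + 1, p.2) := by
    rintro ⟨_ | k, l⟩ hp
    · simp at hp
    · exact ⟨(k, l), rfl⟩
  rw [← tsum_mul_left, ← hinj.tsum_eq hsupp]
  congr 1
  ext ⟨k, l⟩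
  push_cast
  linear_combination (poissonPMF lam l * g (k + 1, l)) * succ_mul_poissonPMF_succ lam k

lemma tsum_poissonPMF_mul_poissonPMF_mul_sub_add_one_pow (lam : ℝ) (m : ℕ) :
    ∑' p : ℕ × ℕ, poissonPMF lam p.1 * poissonPMF lam p.2 * ((p.1 : ℝ) - p.2 + 1) ^ m =
      ∑ j ∈ Finset.range (m + 1), (m.choose j : ℝ) * skellamMoment lam j := by
  simp_rw [add_pow, one_pow, mul_one, Finset.mul_sum, ← mul_assoc]
  rw [Summable.tsum_finsetSum fun j _ => (summable_skellamMoment lam j).mul_right _]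
  refine Finset.sum_congr rfl fun j _ => ?_
  rw [skellamMoment, ← tsum_mul_left]
  exact tsum_congr fun p => by ring

lemma skellamMoment_succ (lam : ℝ) (m : ℕ) :
    skellamMoment lam (m + 1) = (1 - (-1) ^ m) * lam *
      ∑ j ∈ Finset.range (m + 1), (m.choose j : ℝ) * skellamMoment lam j := by
  have hsummable : ∀ (x : ℕ × ℕ → ℕ), (∀ p, x p = p.1 ∨ x p = p.2) → Summable fun p : ℕ × ℕ =>
      poissonPMF lam p.1 * poissonPMF lam p.2 * ((x p : ℝ) * ((p.1 : ℝ) - p.2) ^ m) := by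
    intro x hx
    refine summable_poissonPMF_mul_poissonPMF_mul lam (m + 1) fun p => ?_
    have hxp : (x p : ℝ) ≤ ((p.1 : ℝ) + 1) * ((p.2 : ℝ) + 1) := by
      rcases hx p with h | h <;> rw [h] <;>
        nlinarith [(p.1.cast_nonneg : (0 : ℝ) ≤ p.1), (p.2.cast_nonneg : (0 : ℝ) ≤ p.2)]
    rw [abs_mul, abs_pow, Nat.abs_cast, pow_succ']
    gcongr
    exact abs_natCast_sub_natCast_le p.1 p.2
  have hsplit : skellamMoment lam (m + 1) =
      ∑' p : ℕ × ℕ, poissonPMF lam p.1 * poissonPMF lam p.2 * (p.1 * ((p.1 : ℝ) - p.2) ^ m) -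
        ∑' p : ℕ × ℕ, poissonPMF lam p.1 * poissonPMF lam p.2 * (p.2 * ((p.1 : ℝ) - p.2) ^ m) := by
    rw [skellamMoment, ← (hsummable _ fun p => .inl rfl).tsum_sub (hsummable _ fun p => .inr rfl)]
    exact tsum_congr fun p => by ring
  have hswap :
      ∑' p : ℕ × ℕ, poissonPMF lam p.1 * poissonPMF lam p.2 * (p.2 * ((p.1 : ℝ) - p.2) ^ m) =
        (-1) ^ m * ∑' p : ℕ × ℕ, poissonPMF lam p.1 * poissonPMF lam p.2 *
          (p.1 * ((p.1 : ℝ) - p.2) ^ m) := by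
    rw [← tsum_mul_left, ← tsum_poissonPMF_mul_poissonPMF_mul_swap]
    refine tsum_congr fun p => ?_
    simp only [Prod.fst_swap, Prod.snd_swap]
    rw [← neg_sub, neg_pow]
    ring
  have hshift :
      ∑' p : ℕ × ℕ, poissonPMF lam p.1 * poissonPMF lam p.2 * (p.1 * ((p.1 : ℝ) - p.2) ^ m) =
        lam * ∑ j ∈ Finset.range (m + 1), (m.choose j : ℝ) * skellamMoment lam j := by
    rw [tsum_poissonPMF_mul_poissonPMF_mul_fst,
      ← tsum_poissonPMF_mul_poissonPMF_mul_sub_add_one_pow]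
    exact congrArg _ (tsum_congr fun p => by push_cast; ring)
  rw [hsplit, hswap, hshift]
  ring

lemma skellamMoment_two_mul_add_one (lam : ℝ) (s : ℕ) : skellamMoment lam (2 * s + 1) = 0 := by
  rw [skellamMoment_succ, pow_mul, neg_one_sq, one_pow, sub_self, zero_mul, zero_mul]

lemma skellamMoment_two_mul_add_two (lam : ℝ) (s : ℕ) :
    skellamMoment lam (2 * s + 2) =
      ∑ j ∈ Finset.range (2 * s + 2),
        2 * ((2 * s + 1).choose j : ℝ) * (lam * skellamMoment lam j) := by
  rw [skellamMoment_succ, pow_succ, pow_mul, neg_one_sq, one_pow, Finset.mul_sum]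
  exact Finset.sum_congr rfl fun j _ => by ring

lemma pow_le_pow_add_self {x : ℝ} (hx : 0 ≤ x) {e n : ℕ} (he : 1 ≤ e) (hen : e ≤ n) :
    x ^ e ≤ x ^ n + x := by
  rcases le_total x 1 with hx1 | hx1
  · have := pow_le_of_le_one hx hx1 (by omega : e ≠ 0)
    linarith [pow_nonneg hx n]
  · linarith [pow_le_pow_right₀ hx1 hen]

lemma isBigO_pow_pow_add_self {e n : ℕ} (he : 1 ≤ e) (hen : e ≤ n) :
    (fun x : ℝ => x ^ e) =O[𝓟 (Ioi 0)] fun x => x ^ n + x :=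
  .of_bound 1 <| eventually_principal.2 fun x (hx : 0 < x) => by
    rw [one_mul, Real.norm_of_nonneg (by positivity), Real.norm_of_nonneg (by positivity)]
    exact pow_le_pow_add_self hx.le he hen

theorem skellamMoment_two_mul_isBigO (s : ℕ) :
    (fun lam => skellamMoment lam (2 * s)) =O[𝓟 (Ioi 0)] fun lam => lam ^ s + lam := by
  induction s using Nat.strong_induction_on with
  | _ s ih =>
  rcases s with _ | s
  · simp only [mul_zero, skellamMoment_zero, pow_zero]
    exact .of_bound 1 <| eventually_principal.2 fun x (hx : 0 < x) => by
      rw [one_mul, norm_one, Real.norm_of_nonneg (by positivity)]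
      linarith
  simp_rw [show 2 * (s + 1) = 2 * s + 2 by ring, skellamMoment_two_mul_add_two]
  refine .fun_sum fun j hj => .const_mul_left ?_ _
  obtain ⟨t, rfl | rfl⟩ := Nat.even_or_odd' j
  · rcases t with _ | t
    · simpa only [mul_zero, skellamMoment_zero, mul_one, pow_one] using
        isBigO_pow_pow_add_self le_rfl (by omega : 1 ≤ s + 1)
    have ht : t + 1 < s + 1 := by simp only [Finset.mem_range] at hj; omega
    calc (fun lam => lam * skellamMoment lam (2 * (t + 1)))
        =O[𝓟 (Ioi 0)] fun lam => lam * (lam ^ (t + 1) + lam) := (isBigO_refl _ _).mul (ih _ ht)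
      _ = fun lam => lam ^ (t + 2) + lam ^ 2 := by ext; ring
      _ =O[𝓟 (Ioi 0)] fun lam => lam ^ (s + 1) + lam :=
        (isBigO_pow_pow_add_self (by omega) (by omega)).add
          (isBigO_pow_pow_add_self (by omega) (by omega))
  · simp only [skellamMoment_two_mul_add_one, mul_zero]
    exact isBigO_zero _ _

theorem exists_skellamMoment_two_mul_le (r : ℕ) :
    ∃ C > 0, ∀ lam > 0, skellamMoment lam (2 * r) ≤ C * (lam ^ r + lam) := by
  obtain ⟨C, hC, hbound⟩ := (skellamMoment_two_mul_isBigO r).exists_pos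
  refine ⟨C, hC, fun lam hlam => ?_⟩
  have h := eventually_principal.1 hbound.bound lam hlam
  rw [Real.norm_of_nonneg (by positivity : 0 ≤ lam ^ r + lam)] at h
  exact (Real.le_norm_self _).trans h

-- `X` need not be measurable: the fibres are replaced by their measurable hulls.
lemma lintegral_comp_le_tsum {Ω α : Type*} [MeasurableSpace Ω] [Countable α] (μ : Measure Ω)
    (X : Ω → α) (g : α → ℝ≥0∞) : ∫⁻ ω, g (X ω) ∂μ ≤ ∑' a, g a * μ (X ⁻¹' {a}) :=
  calc ∫⁻ ω, g (X ω) ∂μ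
      ≤ ∫⁻ ω, ∑' a, (toMeasurable μ (X ⁻¹' {a})).indicator (fun _ => g a) ω ∂μ :=
        lintegral_mono fun ω => by
          refine le_trans (le_of_eq ?_) (ENNReal.le_tsum (X ω))
          rw [indicator_of_mem (subset_toMeasurable μ _ (mem_preimage.2 (mem_singleton _)))]
    _ = ∑' a, ∫⁻ ω, (toMeasurable μ (X ⁻¹' {a})).indicator (fun _ => g a) ω ∂μ :=
        lintegral_tsum fun a =>
          (measurable_const.indicator (measurableSet_toMeasurable μ _)).aemeasurable
    _ = ∑' a, g a * μ (X ⁻¹' {a}) := by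
        simp_rw [lintegral_indicator_const (measurableSet_toMeasurable μ _), measure_toMeasurable]

lemma norm_integral_comp_le_tsum {Ω α E : Type*} [MeasurableSpace Ω] [Countable α]
    [NormedAddCommGroup E] [NormedSpace ℝ E] {μ : Measure Ω} (X : Ω → α) {q : α → ℝ}
    (hq0 : ∀ a, 0 ≤ q a) (hq : ∀ a, μ (X ⁻¹' {a}) = ENNReal.ofReal (q a)) {c : α → E}
    (hc : Summable fun a => q a * ‖c a‖) : ‖∫ ω, c (X ω) ∂μ‖ ≤ ∑' a, q a * ‖c a‖ := by
  refine (norm_integral_le_lintegral_norm _).trans <|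
    ENNReal.toReal_le_of_le_ofReal (tsum_nonneg fun a => by have := hq0 a; positivity) ?_
  calc ∫⁻ ω, ENNReal.ofReal ‖c (X ω)‖ ∂μ
      ≤ ∑' a, ENNReal.ofReal ‖c a‖ * μ (X ⁻¹' {a}) := lintegral_comp_le_tsum μ X _
    _ = ∑' a, ENNReal.ofReal (q a * ‖c a‖) := by
        simp_rw [hq, ENNReal.ofReal_mul' (norm_nonneg _), mul_comm]
    _ = ENNReal.ofReal (∑' a, q a * ‖c a‖) :=
        (ENNReal.ofReal_tsum_of_nonneg (fun a => by have := hq0 a; positivity) hc).symm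

theorem stmt6_general (r : ℕ) :
    ∃ C : ℝ, 0 < C ∧
      ∀ (Ω : Type) (_ : MeasurableSpace Ω) (P : MeasureTheory.Measure Ω), IsProbabilityMeasure P →
        ∀ lam : ℝ, 0 < lam → ∀ X₁ X₂ : Ω → ℕ,
          (∀ k : ℕ, P {ω | X₁ ω = k} = ENNReal.ofReal (poissonPMF lam k)) →
          (∀ k : ℕ, P {ω | X₂ ω = k} = ENNReal.ofReal (poissonPMF lam k)) →
          ProbabilityTheory.IndepFun X₁ X₂ P →
          ∫ ω, ((X₁ ω : ℝ) - (X₂ ω : ℝ)) ^ (2 * r) ∂P ≤ C * (lam ^ r + lam) := by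
  obtain ⟨C, hC, hbound⟩ := exists_skellamMoment_two_mul_le r
  refine ⟨C, hC, fun Ω _ P _ lam hlam X₁ X₂ h₁ h₂ hind => ?_⟩
  have hw : ∀ p : ℕ × ℕ, 0 ≤ poissonPMF lam p.1 * poissonPMF lam p.2 := fun p =>
    mul_nonneg (poissonPMF_nonneg hlam.le _) (poissonPMF_nonneg hlam.le _)
  have hlaw : ∀ p : ℕ × ℕ, P ((fun ω => (X₁ ω, X₂ ω)) ⁻¹' {p}) =
      ENNReal.ofReal (poissonPMF lam p.1 * poissonPMF lam p.2) := fun p => by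
    rw [← singleton_prod_singleton, mk_preimage_prod,
      hind.measure_inter_preimage_eq_mul _ _ (.of_discrete) (.of_discrete),
      ENNReal.ofReal_mul (poissonPMF_nonneg hlam.le _), ← h₁, ← h₂]
    rfl
  have hnorm : ∀ p : ℕ × ℕ, ‖((p.1 : ℝ) - p.2) ^ (2 * r)‖ = ((p.1 : ℝ) - p.2) ^ (2 * r) :=
    fun p => Real.norm_of_nonneg ((even_two_mul r).pow_nonneg _)
  calc ∫ ω, ((X₁ ω : ℝ) - (X₂ ω : ℝ)) ^ (2 * r) ∂P
      ≤ ‖∫ ω, ((X₁ ω : ℝ) - (X₂ ω : ℝ)) ^ (2 * r) ∂P‖ := Real.le_norm_self _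
    _ ≤ skellamMoment lam (2 * r) := by
        have := norm_integral_comp_le_tsum (μ := P) (fun ω => (X₁ ω, X₂ ω)) hw hlaw
          (c := fun p : ℕ × ℕ => ((p.1 : ℝ) - p.2) ^ (2 * r))
          (by simpa only [hnorm] using summable_skellamMoment lam (2 * r))
        simpa only [hnorm, skellamMoment] using this
    _ ≤ C * (lam ^ r + lam) := hbound lam hlam

/-- Even moments of the symmetric Skellam distribution: for independent Poisson(`lam`)
variables `X₁, X₂` and `r ≥ 1`, `E[(X₁ - X₂)^{2r}] ≤ C_r (lam^r + lam)`, with `C_r`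
depending only on `r`. -/
theorem stmt6 (r : ℕ) (hr : 1 ≤ r) :
    ∃ C : ℝ, 0 < C ∧
      ∀ (Ω : Type) (_ : MeasurableSpace Ω) (P : MeasureTheory.Measure Ω), IsProbabilityMeasure P →
        ∀ lam : ℝ, 0 < lam → ∀ X₁ X₂ : Ω → ℕ,
          (∀ k : ℕ, P {ω | X₁ ω = k} = ENNReal.ofReal (poissonPMF lam k)) →
          (∀ k : ℕ, P {ω | X₂ ω = k} = ENNReal.ofReal (poissonPMF lam k)) →
          ProbabilityTheory.IndepFun X₁ X₂ P →
          ∫ ω, ((X₁ ω : ℝ) - (X₂ ω : ℝ)) ^ (2 * r) ∂P ≤ C * (lam ^ r + lam) :=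
  stmt6_general r
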